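/- Let $\{X(t)\}$ be i.i.d. with $\mathbb{E}[|X(1)|^p] \le u$ for constants $u > 0$ and $p \in (1,2]$, and mean $\theta$. Define the truncated empirical mean $\widehat{\theta}(s,\epsilon) = \frac{1}{s}\sum_{t=1}^s X(t)\mathbb{1}\{|X(t)| \le (ut/\log(\epsilon^{-1}))^{1/p}\}$. Then for any $\epsilon \in (0, 1/2]$, $\Pr\left(|\widehat{\theta}(s,\epsilon) - \theta| > 4u^{1/p}\left(\frac{\log(\epsilon^{-1})}{s}\right)^{\frac{p-1}{p}}\right) \le 2\epsilon$. -/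

import Mathlib

open MeasureTheory Real

/-!
Truncating the `t`-th sample at `B t = (u t / L) ^ (1 / p)`, with `L = log ε⁻¹`, makes the
summands bounded while the moment bound `E |X| ^ p ≤ u` keeps the damage small: the truncated
sample has mean at most `θ + u B t ^ (1 - p)` and second moment at most `u B t ^ (2 - p)`.
For `λ = (L / (u s)) ^ (1 / p)` we have `λ B t ≤ 1`, so `exp (λ y) ≤ 1 + λ y + λ² y²` on the
range of the truncated samples and, by independence, a Chernoff bound applies. With this
calibration the bias terms add up to at most `p L ≤ 2 L` (because
`∑ t ≤ s, t ^ (1 / p - 1) ≤ p s ^ (1 / p)`), the variance terms to at most `L`, and the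
deviation contributes `-4 L`, leaving a tail `e ^ (-L) = ε`. Applying this to `X` and to `-X`
gives the two-sided bound `2 ε`.
-/

section

open ProbabilityTheory

theorem sub_one_rpow_le {x β : ℝ} (hx : 1 ≤ x) (hβ0 : 0 ≤ β) (hβ1 : β ≤ 1) :
    (x - 1) ^ β ≤ x ^ β - β * x ^ (β - 1) := by
  have hx0 : 0 < x := by linarith
  have hamgm : x ^ (1 - β) * (x - 1) ^ β ≤ (1 - β) * x + β * (x - 1) :=
    geom_mean_le_arith_mean2_weighted (by linarith) hβ0 hx0.le (by linarith) (by ring)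
  have hsplit : (x - 1) ^ β = x ^ (β - 1) * (x ^ (1 - β) * (x - 1) ^ β) := by
    rw [← mul_assoc, ← rpow_add hx0]; simp
  have hxβ : x ^ β = x ^ (β - 1) * x := by
    rw [rpow_sub_one hx0.ne', div_mul_cancel₀ _ hx0.ne']
  rw [hsplit, hxβ]
  nlinarith [rpow_nonneg hx0.le (β - 1)]

theorem sum_Icc_rpow_sub_one_le {β : ℝ} (hβ0 : 0 < β) (hβ1 : β ≤ 1) (n : ℕ) :
    ∑ t ∈ Finset.Icc 1 n, (t : ℝ) ^ (β - 1) ≤ n ^ β / β := by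
  induction n with
  | zero => simp [zero_rpow hβ0.ne']
  | succ n ih =>
    rw [Finset.sum_Icc_succ_top (by omega)]
    have hstep := sub_one_rpow_le (x := (n + 1 : ℕ)) (by simp) hβ0.le hβ1
    push_cast at hstep ⊢
    rw [add_sub_cancel_right] at hstep
    rw [le_div_iff₀ hβ0] at ih ⊢
    nlinarith

noncomputable def truncate (B x : ℝ) : ℝ := if |x| ≤ B then x else 0

theorem measurable_truncate (B : ℝ) : Measurable (truncate B) :=
  Measurable.ite (measurableSet_le measurable_abs measurable_const) measurable_id measurable_const

theorem abs_truncate_le {B : ℝ} (hB : 0 ≤ B) (x : ℝ) : |truncate B x| ≤ B := by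
  unfold truncate; split_ifs with h <;> simp [h, hB]

theorem abs_truncate_le_abs (B x : ℝ) : |truncate B x| ≤ |x| := by
  unfold truncate; split_ifs <;> simp

theorem truncate_neg (B x : ℝ) : truncate B (-x) = -truncate B x := by
  unfold truncate; split_ifs <;> simp_all

theorem truncate_le_add_rpow {B p : ℝ} (hB : 0 < B) (hp : 1 ≤ p) (x : ℝ) :
    truncate B x ≤ x + B ^ (1 - p) * |x| ^ p := by
  have hrem : 0 ≤ B ^ (1 - p) * |x| ^ p := by positivity
  unfold truncate
  split_ifs with h
  · linarith
  · have hx : 0 < |x| := hB.trans (not_le.1 h)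
    have : |x| ≤ B ^ (1 - p) * |x| ^ p := calc
      |x| = |x| ^ (1 - p) * |x| ^ p := by rw [← rpow_add hx]; simp
      _ ≤ B ^ (1 - p) * |x| ^ p := mul_le_mul_of_nonneg_right
        (rpow_le_rpow_of_nonpos hB (not_le.1 h).le (by linarith)) (by positivity)
    linarith [neg_abs_le x]

theorem truncate_sq_le {B p : ℝ} (hB : 0 ≤ B) (hp : p ≤ 2) (x : ℝ) :
    truncate B x ^ 2 ≤ B ^ (2 - p) * |x| ^ p := by
  have hrem : 0 ≤ B ^ (2 - p) * |x| ^ p := by positivity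
  unfold truncate
  split_ifs with h
  · rcases (abs_nonneg x).eq_or_lt with hx | hx
    · rw [← sq_abs, ← hx, sq, zero_mul]; positivity
    calc x ^ 2 = |x| ^ (2 - p) * |x| ^ p := by
          rw [← rpow_add hx, sub_add_cancel, rpow_two, sq_abs]
      _ ≤ B ^ (2 - p) * |x| ^ p := by gcongr
  · rwa [sq, zero_mul]

section Moments

variable {Ω : Type*} [MeasurableSpace Ω] {μ : Measure Ω} {Z : Ω → ℝ} {B p : ℝ}

theorem integral_truncate_le (hZ : Integrable Z μ) (hZp : Integrable (fun ω => |Z ω| ^ p) μ)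
    (hB : 0 < B) (hp : 1 ≤ p) :
    ∫ ω, truncate B (Z ω) ∂μ ≤ ∫ ω, Z ω ∂μ + B ^ (1 - p) * ∫ ω, |Z ω| ^ p ∂μ := by
  have hint : Integrable (fun ω => truncate B (Z ω)) μ :=
    hZ.mono ((measurable_truncate B).comp_aemeasurable hZ.aemeasurable).aestronglyMeasurable
      (ae_of_all _ fun ω => by simpa only [norm_eq_abs] using abs_truncate_le_abs B (Z ω))
  rw [← integral_const_mul, ← integral_add hZ (hZp.const_mul _)]
  exact integral_mono hint (hZ.add (hZp.const_mul _)) fun ω => truncate_le_add_rpow hB hp (Z ω)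

theorem integral_truncate_sq_le (hZp : Integrable (fun ω => |Z ω| ^ p) μ)
    (hB : 0 ≤ B) (hp : p ≤ 2) :
    ∫ ω, truncate B (Z ω) ^ 2 ∂μ ≤ B ^ (2 - p) * ∫ ω, |Z ω| ^ p ∂μ := by
  rw [← integral_const_mul]
  exact integral_mono_of_nonneg (ae_of_all _ fun ω => sq_nonneg _) (hZp.const_mul _)
    (ae_of_all _ fun ω => truncate_sq_le hB hp (Z ω))

end Moments

theorem mgf_le_exp_of_abs_mul_le_one {Ω : Type*} [MeasurableSpace Ω] {μ : Measure Ω}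
    [IsProbabilityMeasure μ] {Y : Ω → ℝ} {t : ℝ} (hY : Integrable Y μ)
    (hY2 : Integrable (fun ω => Y ω ^ 2) μ) (hbound : ∀ ω, |t * Y ω| ≤ 1) :
    mgf Y μ t ≤ exp (t * ∫ ω, Y ω ∂μ + t ^ 2 * ∫ ω, Y ω ^ 2 ∂μ) := by
  have hlin : Integrable (fun ω => 1 + t * Y ω) μ := (integrable_const 1).add (hY.const_mul t)
  have hquad : Integrable (fun ω => 1 + t * Y ω + t ^ 2 * Y ω ^ 2) μ :=
    hlin.add (hY2.const_mul _)
  have hexp : ∀ ω, exp (t * Y ω) ≤ 1 + t * Y ω + t ^ 2 * Y ω ^ 2 := fun ω => by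
    have := (abs_le.1 (abs_exp_sub_one_sub_id_le (hbound ω))).2
    linarith [mul_pow t (Y ω) 2]
  calc mgf Y μ t ≤ ∫ ω, (1 + t * Y ω + t ^ 2 * Y ω ^ 2) ∂μ :=
        integral_mono_of_nonneg (ae_of_all _ fun ω => (exp_pos _).le) hquad (ae_of_all _ hexp)
    _ = t * ∫ ω, Y ω ∂μ + t ^ 2 * ∫ ω, Y ω ^ 2 ∂μ + 1 := by
        rw [integral_add hlin (hY2.const_mul _),
          integral_add (integrable_const 1) (hY.const_mul t), integral_const_mul,
          integral_const_mul]
        simp only [integral_const, probReal_univ, smul_eq_mul, mul_one]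
        ring
    _ ≤ exp (t * ∫ ω, Y ω ∂μ + t ^ 2 * ∫ ω, Y ω ^ 2 ∂μ) := add_one_le_exp _

theorem measureReal_sum_ge_le_of_abs_le {Ω ι : Type*} [MeasurableSpace Ω] {μ : Measure Ω}
    [IsProbabilityMeasure μ] {Y : ι → Ω → ℝ} (hmeas : ∀ i, Measurable (Y i))
    (hindep : iIndepFun Y μ) {S : Finset ι} {C : ι → ℝ} (hbound : ∀ i ∈ S, ∀ ω, |Y i ω| ≤ C i)
    {t : ℝ} (ht : 0 ≤ t) (htC : ∀ i ∈ S, t * C i ≤ 1) (a : ℝ) :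
    μ.real {ω | a ≤ ∑ i ∈ S, Y i ω} ≤
      exp (-t * a + ∑ i ∈ S, (t * ∫ ω, Y i ω ∂μ + t ^ 2 * ∫ ω, Y i ω ^ 2 ∂μ)) := by
  have hY : ∀ i ∈ S, Integrable (Y i) μ := fun i hi =>
    .of_bound (hmeas i).aestronglyMeasurable (C i) (ae_of_all _ (hbound i hi))
  have hY2 : ∀ i ∈ S, Integrable (fun ω => Y i ω ^ 2) μ := fun i hi =>
    .of_bound ((hmeas i).pow_const 2).aestronglyMeasurable (C i ^ 2) (ae_of_all _ fun ω => by
      rw [norm_pow, norm_eq_abs]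
      exact pow_le_pow_left₀ (abs_nonneg _) (hbound i hi ω) 2)
  have htY : ∀ i ∈ S, ∀ ω, |t * Y i ω| ≤ 1 := fun i hi ω => by
    rw [abs_mul, abs_of_nonneg ht]
    exact (mul_le_mul_of_nonneg_left (hbound i hi ω) ht).trans (htC i hi)
  have hexp : ∀ i ∈ S, Integrable (fun ω => exp (t * Y i ω)) μ := fun i hi =>
    .of_bound ((hmeas i).const_mul t).exp.aestronglyMeasurable (exp 1) (ae_of_all _ fun ω => by
      rw [norm_eq_abs, abs_of_pos (exp_pos _)]
      exact exp_le_exp.2 ((le_abs_self _).trans (htY i hi ω)))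
  have hchernoff := measure_ge_le_exp_mul_mgf a ht (hindep.integrable_exp_mul_sum hmeas hexp)
  rw [hindep.mgf_sum hmeas] at hchernoff
  simp only [Finset.sum_apply] at hchernoff
  refine hchernoff.trans ?_
  rw [exp_add, exp_sum]
  gcongr with i hi
  · exact fun i _ => mgf_nonneg
  · exact mgf_le_exp_of_abs_mul_le_one (hY i hi) (hY2 i hi) (htY i hi)

section Calibration

/- `(u * t / L) ^ (1 / p)` is the truncation level of the `t`-th sample and
`(L / (u * s)) ^ (1 / p)` the Chernoff parameter; `L` plays the role of `log ε⁻¹`. -/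

variable {u p L : ℝ} {s t : ℕ}

theorem truncatedMean_param_mul_level (hu : 0 < u) (hL : 0 < L) (hs : 0 < s) :
    (L / (u * s)) ^ (1 / p) * (u * t / L) ^ (1 / p) = ((t : ℝ) / s) ^ (1 / p) := by
  rw [← mul_rpow (by positivity) (by positivity)]
  congr 1
  field_simp

theorem truncatedMean_div_level_rpow (hu : 0 < u) (hp : 0 < p) (hL : 0 < L) (ht : 0 < t) :
    u / ((u * t / L) ^ (1 / p)) ^ p = L / t := by
  rw [← rpow_mul (by positivity), one_div_mul_cancel hp.ne', rpow_one]
  field_simp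

theorem truncatedMean_bias_eq (hu : 0 < u) (hp : 0 < p) (hL : 0 < L) (hs : 0 < s) (ht : 0 < t) :
    (L / (u * s)) ^ (1 / p) * (u * ((u * t / L) ^ (1 / p)) ^ (1 - p)) =
      L / s ^ (1 / p) * (t : ℝ) ^ (1 / p - 1) := by
  have hlevel := truncatedMean_param_mul_level (p := p) (t := t) hu hL hs
  have hmass := truncatedMean_div_level_rpow hu hp hL ht
  have ht0 : (0 : ℝ) < t := by exact_mod_cast ht
  set B := (u * t / L) ^ (1 / p)
  calc _ = (L / (u * s)) ^ (1 / p) * B * (u / B ^ p) := by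
        rw [rpow_sub (by positivity), rpow_one]; ring
    _ = _ := by
        rw [hlevel, hmass, div_rpow ht0.le (by positivity), rpow_sub_one ht0.ne']; ring

theorem truncatedMean_variance_le (hu : 0 < u) (hp : 0 < p) (hp2 : p ≤ 2) (hL : 0 < L)
    (ht : 0 < t) (hts : t ≤ s) :
    ((L / (u * s)) ^ (1 / p)) ^ 2 * (u * ((u * t / L) ^ (1 / p)) ^ (2 - p)) ≤ L / s := by
  have hlevel := truncatedMean_param_mul_level (p := p) (t := t) hu hL (ht.trans_le hts)
  have hmass := truncatedMean_div_level_rpow hu hp hL ht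
  have ht0 : (0 : ℝ) < t := by exact_mod_cast ht
  have hs0 : (0 : ℝ) < s := by exact_mod_cast ht.trans_le hts
  set B := (u * t / L) ^ (1 / p)
  calc _ = ((L / (u * s)) ^ (1 / p) * B) ^ 2 * (u / B ^ p) := by
        rw [rpow_sub (by positivity), rpow_two]; ring
    _ = ((t : ℝ) / s) ^ (2 / p) * (L / t) := by
        rw [hlevel, hmass, ← rpow_natCast, ← rpow_mul (by positivity)]; ring_nf
    _ ≤ (t / s) * (L / t) := by
        gcongr
        simpa using rpow_le_rpow_of_exponent_ge (div_pos ht0 hs0)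
          ((div_le_one hs0).2 (by exact_mod_cast hts)) ((one_le_div hp).2 hp2)
    _ = L / s := by field_simp

theorem truncatedMean_sum_bias_add_variance_le (hu : 0 < u) (hp1 : 1 < p) (hp2 : p ≤ 2)
    (hL : 0 < L) (hs : 0 < s) :
    ∑ t ∈ Finset.Icc 1 s, ((L / (u * s)) ^ (1 / p) * (u * ((u * t / L) ^ (1 / p)) ^ (1 - p)) +
      ((L / (u * s)) ^ (1 / p)) ^ 2 * (u * ((u * t / L) ^ (1 / p)) ^ (2 - p))) ≤ 3 * L := by
  have hp : 0 < p := by linarith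
  have hpower := sum_Icc_rpow_sub_one_le (one_div_pos.2 hp) ((div_le_one hp).2 hp1.le) s
  calc _ ≤ ∑ t ∈ Finset.Icc 1 s, (L / s ^ (1 / p) * (t : ℝ) ^ (1 / p - 1) + L / s) := by
        refine Finset.sum_le_sum fun t ht => ?_
        obtain ⟨ht1, hts⟩ := Finset.mem_Icc.1 ht
        rw [truncatedMean_bias_eq hu hp hL hs ht1]
        exact add_le_add le_rfl (truncatedMean_variance_le hu hp hp2 hL ht1 hts)
    _ = L / s ^ (1 / p) * ∑ t ∈ Finset.Icc 1 s, (t : ℝ) ^ (1 / p - 1) + L := by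
        rw [Finset.sum_add_distrib, ← Finset.mul_sum, Finset.sum_const, Nat.card_Icc,
          nsmul_eq_mul, Nat.add_sub_cancel]
        field_simp
    _ ≤ L / s ^ (1 / p) * (s ^ (1 / p) / (1 / p)) + L := by gcongr
    _ = p * L + L := by field_simp
    _ ≤ 3 * L := by nlinarith

theorem truncatedMean_param_mul_deviation (hu : 0 < u) (hp : 0 < p) (hL : 0 < L) (hs : 0 < s) :
    (L / (u * s)) ^ (1 / p) * (s * (4 * u ^ (1 / p) * (L / s) ^ ((p - 1) / p))) = 4 * L := by
  have hs0 : (0 : ℝ) < s := by exact_mod_cast hs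
  calc _ = 4 * s * ((L / (u * s) * u) ^ (1 / p) * (L / s) ^ ((p - 1) / p)) := by
        rw [mul_rpow (by positivity) hu.le]; ring
    _ = 4 * s * (L / s) := by
        rw [show L / (u * s) * u = L / s by field_simp, ← rpow_add (by positivity),
          show 1 / p + (p - 1) / p = 1 by field_simp; ring, rpow_one]
    _ = 4 * L := by field_simp

theorem truncatedMean_chernoff_exponent_le (hu : 0 < u) (hp1 : 1 < p) (hp2 : p ≤ 2) (hL : 0 < L)
    (hs : 0 < s) (θ : ℝ) {m v : ℕ → ℝ}
    (hm : ∀ t ∈ Finset.Icc 1 s, m t ≤ θ + u * ((u * t / L) ^ (1 / p)) ^ (1 - p))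
    (hv : ∀ t ∈ Finset.Icc 1 s, v t ≤ u * ((u * t / L) ^ (1 / p)) ^ (2 - p)) :
    -(L / (u * s)) ^ (1 / p) * (s * (θ + 4 * u ^ (1 / p) * (L / s) ^ ((p - 1) / p))) +
      ∑ t ∈ Finset.Icc 1 s, ((L / (u * s)) ^ (1 / p) * m t + ((L / (u * s)) ^ (1 / p)) ^ 2 * v t)
      ≤ -L := by
  have hp : 0 < p := by linarith
  set lam := (L / (u * s)) ^ (1 / p)
  set B : ℕ → ℝ := fun t => (u * t / L) ^ (1 / p)
  calc _ ≤ -lam * (s * (θ + 4 * u ^ (1 / p) * (L / s) ^ ((p - 1) / p))) +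
        ∑ t ∈ Finset.Icc 1 s,
          (lam * θ + (lam * (u * B t ^ (1 - p)) + lam ^ 2 * (u * B t ^ (2 - p)))) := by
        refine add_le_add le_rfl (Finset.sum_le_sum fun t ht => ?_)
        have := mul_le_mul_of_nonneg_left (hm t ht) (by positivity : 0 ≤ lam)
        have := mul_le_mul_of_nonneg_left (hv t ht) (sq_nonneg lam)
        linarith
    _ = -(lam * (s * (4 * u ^ (1 / p) * (L / s) ^ ((p - 1) / p)))) +
        ∑ t ∈ Finset.Icc 1 s, (lam * (u * B t ^ (1 - p)) + lam ^ 2 * (u * B t ^ (2 - p))) := by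
        rw [Finset.sum_add_distrib, Finset.sum_const, Nat.card_Icc, nsmul_eq_mul,
          Nat.add_sub_cancel]
        ring
    _ ≤ -(4 * L) + 3 * L := by
        rw [truncatedMean_param_mul_deviation hu hp hL hs]
        exact add_le_add le_rfl (truncatedMean_sum_bias_add_variance_le hu hp1 hp2 hL hs)
    _ = -L := by ring

end Calibration
theorem measure_truncatedMean_sub_integral_gt_le {Ω : Type*} [MeasurableSpace Ω]
    (μ : Measure Ω) [IsProbabilityMeasure μ] (X : ℕ → Ω → ℝ) (hmeas : ∀ t, Measurable (X t))
    (hindep : iIndepFun X μ) (hident : ∀ t, IdentDistrib (X t) (X 0) μ μ) {u p L : ℝ}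
    (hu : 0 < u) (hp1 : 1 < p) (hp2 : p ≤ 2) (hXint : Integrable (X 0) μ)
    (hmom : Integrable (fun ω => |X 0 ω| ^ p) μ) (hmom_le : ∫ ω, |X 0 ω| ^ p ∂μ ≤ u)
    (hL : 0 < L) {s : ℕ} (hs : 0 < s) :
    μ {ω | 4 * u ^ ((1 : ℝ) / p) * (L / s) ^ ((p - 1) / p) <
        1 / (s : ℝ) * ∑ t ∈ Finset.Icc 1 s, truncate ((u * t / L) ^ ((1 : ℝ) / p)) (X t ω) -
          ∫ ω, X 0 ω ∂μ} ≤ ENNReal.ofReal (exp (-L)) := by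
  have hs0 : (0 : ℝ) < s := by exact_mod_cast hs
  set θ := ∫ ω, X 0 ω ∂μ
  set δ := 4 * u ^ ((1 : ℝ) / p) * (L / s) ^ ((p - 1) / p)
  set lam := (L / (u * s)) ^ (1 / p)
  set B : ℕ → ℝ := fun t => (u * t / L) ^ (1 / p)
  set Y : ℕ → Ω → ℝ := fun t ω => truncate (B t) (X t ω)
  have hB : ∀ t, 0 ≤ B t := fun t => by positivity
  have hlamB : ∀ t ∈ Finset.Icc 1 s, lam * B t ≤ 1 := fun t ht => by
    rw [truncatedMean_param_mul_level hu hL hs]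
    exact rpow_le_one (by positivity)
      ((div_le_one hs0).2 (by exact_mod_cast (Finset.mem_Icc.1 ht).2)) (by positivity)
  have hmean : ∀ t ∈ Finset.Icc 1 s, ∫ ω, Y t ω ∂μ ≤ θ + u * B t ^ (1 - p) := fun t ht => by
    have ht0 : (0 : ℝ) < t := by exact_mod_cast (Finset.mem_Icc.1 ht).1
    have hBt : 0 < B t := by positivity
    calc ∫ ω, Y t ω ∂μ = ∫ ω, truncate (B t) (X 0 ω) ∂μ :=
          ((hident t).comp (measurable_truncate (B t))).integral_eq
      _ ≤ θ + B t ^ (1 - p) * ∫ ω, |X 0 ω| ^ p ∂μ := integral_truncate_le hXint hmom hBt hp1.le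
      _ ≤ θ + u * B t ^ (1 - p) := by
        have := mul_le_mul_of_nonneg_left hmom_le (rpow_nonneg (hB t) (1 - p))
        linarith
  have hsq : ∀ t, ∫ ω, Y t ω ^ 2 ∂μ ≤ u * B t ^ (2 - p) := fun t => calc
    ∫ ω, Y t ω ^ 2 ∂μ = ∫ ω, truncate (B t) (X 0 ω) ^ 2 ∂μ :=
        ((hident t).comp ((measurable_truncate (B t)).pow_const 2)).integral_eq
    _ ≤ B t ^ (2 - p) * ∫ ω, |X 0 ω| ^ p ∂μ := integral_truncate_sq_le hmom (hB t) hp2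
    _ ≤ u * B t ^ (2 - p) := by
        rw [mul_comm u]; exact mul_le_mul_of_nonneg_left hmom_le (rpow_nonneg (hB t) _)
  have hchernoff := measureReal_sum_ge_le_of_abs_le
    (fun t => (measurable_truncate _).comp (hmeas t))
    (hindep.comp (fun t => truncate (B t)) fun t => measurable_truncate _)
    (fun t _ ω => abs_truncate_le (hB t) (X t ω)) (by positivity) hlamB (s * (θ + δ))
  have hevent : {ω | δ < 1 / (s : ℝ) * ∑ t ∈ Finset.Icc 1 s, Y t ω - θ} ⊆
      {ω | s * (θ + δ) ≤ ∑ t ∈ Finset.Icc 1 s, Y t ω} := Set.ofPred_subset_ofPred.2 fun ω hω => by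
    rw [one_div, inv_mul_eq_div, lt_sub_iff_add_lt', lt_div_iff₀ hs0] at hω
    linarith
  refine (measure_mono hevent).trans ((ENNReal.le_ofReal_iff_toReal_le (measure_ne_top _ _)
    (exp_pos _).le).2 ?_)
  exact hchernoff.trans (exp_le_exp.2
    (truncatedMean_chernoff_exponent_le hu hp1 hp2 hL hs θ hmean fun t _ => hsq t))

theorem measure_lt_abs_le_add {Ω : Type*} [MeasurableSpace Ω] (μ : Measure Ω) (f : Ω → ℝ)
    (c : ℝ) : μ {ω | c < |f ω|} ≤ μ {ω | c < f ω} + μ {ω | c < -f ω} :=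
  (measure_mono (t := {ω | c < f ω} ∪ {ω | c < -f ω})
    fun ω (hω : c < |f ω|) => (lt_abs.1 hω : c < f ω ∨ c < -f ω)).trans (measure_union_le _ _)

end

/-- Truncated empirical mean concentration (Bubeck–Cesa-Bianchi–Lugosi): for i.i.d.
`X` with `E[|X|^p] ≤ u`, `p ∈ (1,2]`, the truncated mean
`θ̂(s,ε) = (1/s) ∑ₜ X(t) 𝟙{|X(t)| ≤ (ut/log(ε⁻¹))^(1/p)}` satisfies
`Pr(|θ̂(s,ε) - θ| > 4u^(1/p)(log(ε⁻¹)/s)^((p-1)/p)) ≤ 2ε` for `ε ∈ (0,1/2]`. -/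
theorem truncated_mean_concentration {Ω : Type*} [MeasurableSpace Ω]
    (ℙ : Measure Ω) [IsProbabilityMeasure ℙ]
    (X : ℕ → Ω → ℝ) (hmeas : ∀ t, Measurable (X t))
    (hindep : ProbabilityTheory.iIndepFun X ℙ)
    (hident : ∀ t, Measure.map (X t) ℙ = Measure.map (X 0) ℙ)
    (u p θ : ℝ) (hu : 0 < u) (hp1 : 1 < p) (hp2 : p ≤ 2)
    (hXint : Integrable (X 0) ℙ) (hθ : ∫ ω, X 0 ω ∂ℙ = θ)
    (hmom : Integrable (fun ω => |X 0 ω| ^ p) ℙ)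
    (hmom_le : ∫ ω, |X 0 ω| ^ p ∂ℙ ≤ u)
    (s : ℕ) (hs : 0 < s) (ε : ℝ) (hε : ε ∈ Set.Ioc (0 : ℝ) (1 / 2)) :
    ℙ {ω | 4 * u ^ ((1 : ℝ) / p) * (Real.log ε⁻¹ / s) ^ ((p - 1) / p) <
        |(1 / (s : ℝ)) * ∑ t ∈ Finset.Icc 1 s,
          (if |X t ω| ≤ (u * t / Real.log ε⁻¹) ^ ((1 : ℝ) / p) then X t ω else 0) - θ|} ≤
      ENNReal.ofReal (2 * ε) := by
  obtain ⟨hε0, hε2⟩ := hε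
  have hL : 0 < log ε⁻¹ := log_pos ((one_lt_inv₀ hε0).2 (by linarith))
  have hident' : ∀ t, ProbabilityTheory.IdentDistrib (X t) (X 0) ℙ ℙ := fun t =>
    ⟨(hmeas t).aemeasurable, (hmeas 0).aemeasurable, hident t⟩
  have hupper := measure_truncatedMean_sub_integral_gt_le ℙ X hmeas hindep hident' hu hp1 hp2
    hXint hmom hmom_le hL hs
  have hlower := measure_truncatedMean_sub_integral_gt_le ℙ (fun t ω => -X t ω)
    (fun t => (hmeas t).neg) (hindep.comp (fun _ x => -x) fun _ => measurable_neg)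
    (fun t => (hident' t).comp measurable_neg) hu hp1 hp2 hXint.neg (by simpa using hmom)
    (by simpa using hmom_le) hL hs
  simp only [truncate_neg, Finset.sum_neg_distrib, integral_neg, hθ, mul_neg,
    neg_sub_neg] at hupper hlower
  rw [show exp (-log ε⁻¹) = ε by rw [log_inv, neg_neg, exp_log hε0]] at hupper hlower
  refine (measure_lt_abs_le_add ℙ _ _).trans ?_
  simp only [neg_sub]
  rw [two_mul, ENNReal.ofReal_add hε0.le hε0.le]
  exact add_le_add hupper hlower
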